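/- Let A and B be nonempty finite types, each with a distinguished element 0, and write e₀ for the standard basis vector of ℂ^{A×B} at index (0,0). Let U and V be unitary matrices on ℂ^{A×B}. Let |ρ⟩ = U·e₀ with reduced density matrix ρ_A on A, and let |σ⟩ = V·e₀ with reduced density matrix σ_A on A. Let SWAP_{BB'} be the permutation unitary on ℂ^{(A×B)×(A×B)} sending the basis vector at index ((a,b),(a',b')) to the basis vector at index ((a,b'),(a',b)), and set W = (V† ⊗ I_{A×B}) · SWAP_{BB'} · (U ⊗ V). Then ∑_{(a',b') ∈ A×B} |(W (e₀ ⊗ e₀)) ((0,0),(a',b'))|² = trace(ρ_A · σ_A · σ_A), i.e., the squared norm of the projection of W(e₀⊗e₀) onto basis states whose first A×B component is (0,0) equals tr(ρσ²). -/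

import Mathlib

open Matrix Kronecker Finset

/-!
Write `u = U e₀` and `v = V e₀`, so that `U ⊗ V` sends `e₀ ⊗ e₀` to `u ⊗ v`. Row `e₀` of `V†` is
`v̄`, so after the swap the `e₀`-block of `W (e₀ ⊗ e₀)` is the vector `(σ_A ⊗ I) u`. Its squared norm
is the trace of its reduced density matrix `σ_A ρ_A σ_A`, and cyclicity of the trace gives
`tr (ρ_A σ_A²)`.
-/

noncomputable section

/-- Kronecker (tensor) product of two vectors. -/
def vecKron {I J : Type*} (x : I → ℂ) (y : J → ℂ) : I × J → ℂ := fun p => x p.1 * y p.2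

/-- Reduced density matrix on `A` of a vector `v ∈ ℂ^{A×B}`. -/
def reducedA {A B : Type*} [Fintype B] (v : A × B → ℂ) : Matrix A A ℂ :=
  Matrix.of fun i i' => ∑ j, v (i, j) * star (v (i', j))

/-- The permutation unitary `SWAP_{BB'}` on `ℂ^{(A×B)×(A×B)}`, sending the basis vector at
index `((a,b),(a',b'))` to the basis vector at index `((a,b'),(a',b))`. -/
def swapBB (A B : Type*) [DecidableEq A] [DecidableEq B] :
    Matrix ((A × B) × (A × B)) ((A × B) × (A × B)) ℂ :=
  Matrix.of fun i j => if i = ((j.1.1, j.2.2), (j.2.1, j.1.2)) then 1 else 0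

lemma kronecker_mulVec_vecKron {I J K L : Type*} [Fintype K] [Fintype L]
    (M : Matrix I K ℂ) (N : Matrix J L ℂ) (x : K → ℂ) (y : L → ℂ) :
    (M ⊗ₖ N) *ᵥ vecKron x y = vecKron (M *ᵥ x) (N *ᵥ y) := by
  ext ⟨i, j⟩
  simp only [mulVec, dotProduct, vecKron, kroneckerMap_apply, Fintype.sum_prod_type,
    Finset.sum_mul_sum]
  exact Finset.sum_congr rfl fun _ _ => Finset.sum_congr rfl fun _ _ => by ring

lemma swapBB_mulVec_apply {A B : Type*} [Fintype A] [Fintype B] [DecidableEq A] [DecidableEq B]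
    (z : (A × B) × (A × B) → ℂ) (a : A) (b : B) (a' : A) (b' : B) :
    (swapBB A B *ᵥ z) ((a, b), (a', b')) = z ((a, b'), (a', b)) := by
  simp only [swapBB, mulVec, dotProduct, of_apply, ite_mul, one_mul, zero_mul]
  rw [Fintype.sum_eq_single ((a, b'), (a', b))]
  · simp
  · intro j hj
    rw [if_neg]
    contrapose! hj
    simp only [Prod.ext_iff] at hj ⊢
    tauto

lemma kronecker_one_mulVec_apply {I J : Type*} [Fintype I] [Fintype J] [DecidableEq J]
    (M : Matrix I I ℂ) (z : I × J → ℂ) (i : I) (j : J) :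
    ((M ⊗ₖ (1 : Matrix J J ℂ)) *ᵥ z) (i, j) = ∑ k, M i k * z (k, j) := by
  simp only [mulVec, dotProduct, kroneckerMap_apply, one_apply, Fintype.sum_prod_type,
    mul_ite, mul_one, mul_zero, ite_mul, zero_mul, Finset.sum_ite_eq, Finset.mem_univ, if_true]

lemma reducedA_conjTranspose {A B : Type*} [Fintype B] (v : A × B → ℂ) :
    (reducedA v)ᴴ = reducedA v := by
  ext i i'
  simp [reducedA, star_sum, mul_comm]

lemma trace_reducedA {A B : Type*} [Fintype A] [Fintype B] (v : A × B → ℂ) :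
    (reducedA v).trace = ((∑ p, ‖v p‖ ^ 2 : ℝ) : ℂ) := by
  simp only [trace, diag_apply, reducedA, of_apply, Fintype.sum_prod_type]
  push_cast
  simp only [← Complex.mul_conj', Complex.star_def]

lemma reducedA_kronecker_one_mulVec {A B : Type*} [Fintype A] [Fintype B] [DecidableEq B]
    (M : Matrix A A ℂ) (v : A × B → ℂ) :
    reducedA ((M ⊗ₖ (1 : Matrix B B ℂ)) *ᵥ v) = M * reducedA v * Mᴴ := by
  ext i i'
  simp only [reducedA, of_apply, kronecker_one_mulVec_apply, mul_apply, conjTranspose_apply,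
    star_sum, star_mul', Finset.sum_mul, Finset.mul_sum]
  rw [Finset.sum_comm]
  refine Finset.sum_congr rfl fun c' _ => ?_
  rw [Finset.sum_comm]
  exact Finset.sum_congr rfl fun c _ => Finset.sum_congr rfl fun b _ => by ring

lemma swap_circuit_single_apply {A B : Type*} [Fintype A] [Fintype B] [DecidableEq A]
    [DecidableEq B] (U V : Matrix (A × B) (A × B) ℂ) (x p : A × B) :
    (((Vᴴ ⊗ₖ (1 : Matrix (A × B) (A × B) ℂ)) * swapBB A B * (U ⊗ₖ V)) *ᵥ
        vecKron (Pi.single x 1) (Pi.single x 1)) (x, p)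
      = ((reducedA (V *ᵥ Pi.single x 1) ⊗ₖ (1 : Matrix B B ℂ)) *ᵥ (U *ᵥ Pi.single x 1)) p := by
  obtain ⟨a, b⟩ := p
  rw [← mulVec_mulVec, ← mulVec_mulVec, kronecker_mulVec_vecKron, kronecker_one_mulVec_apply,
    kronecker_one_mulVec_apply, Fintype.sum_prod_type]
  simp only [swapBB_mulVec_apply, vecKron, conjTranspose_apply, mulVec_single_one,
    reducedA, of_apply, col_apply, Finset.sum_mul]
  exact Finset.sum_congr rfl fun _ _ => Finset.sum_congr rfl fun _ _ => by ring

theorem stmt1_general {A B : Type*} [Fintype A] [Fintype B] [DecidableEq A] [DecidableEq B]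
    [Zero A] [Zero B]
    (U V : Matrix (A × B) (A × B) ℂ)
    (e0 : A × B → ℂ) (he0 : e0 = fun p => if p = ((0 : A), (0 : B)) then 1 else 0)
    (W : Matrix ((A × B) × (A × B)) ((A × B) × (A × B)) ℂ)
    (hW : W = (Vᴴ ⊗ₖ (1 : Matrix (A × B) (A × B) ℂ)) * swapBB A B * (U ⊗ₖ V)) :
    ((∑ p : A × B, ‖(W *ᵥ vecKron e0 e0) ((((0 : A), (0 : B))), p)‖ ^ 2 : ℝ) : ℂ)
      = (reducedA (U *ᵥ e0) * reducedA (V *ᵥ e0) * reducedA (V *ᵥ e0)).trace := by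
  obtain rfl : e0 = Pi.single ((0 : A), (0 : B)) 1 := by
    subst he0; ext p; simp [Pi.single_apply]
  subst hW
  simp_rw [swap_circuit_single_apply]
  rw [← trace_reducedA, reducedA_kronecker_one_mulVec, reducedA_conjTranspose, trace_mul_cycle,
    trace_mul_cycle]

theorem stmt1 {A B : Type*} [Fintype A] [Fintype B] [DecidableEq A] [DecidableEq B]
    [Zero A] [Zero B]
    (U V : Matrix (A × B) (A × B) ℂ)
    (hU : U ∈ Matrix.unitaryGroup (A × B) ℂ) (hV : V ∈ Matrix.unitaryGroup (A × B) ℂ)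
    (e0 : A × B → ℂ) (he0 : e0 = fun p => if p = ((0 : A), (0 : B)) then 1 else 0)
    (W : Matrix ((A × B) × (A × B)) ((A × B) × (A × B)) ℂ)
    (hW : W = (Vᴴ ⊗ₖ (1 : Matrix (A × B) (A × B) ℂ)) * swapBB A B * (U ⊗ₖ V)) :
    ((∑ p : A × B, ‖(W *ᵥ vecKron e0 e0) ((((0 : A), (0 : B))), p)‖ ^ 2 : ℝ) : ℂ)
      = (reducedA (U *ᵥ e0) * reducedA (V *ᵥ e0) * reducedA (V *ᵥ e0)).trace :=
  stmt1_general U V e0 he0 W hW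

end
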